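/- Let a, b, c ∈ ℂ with c not equal to a nonpositive integer. Then the Gauss hypergeometric series F(a,b,c;z) = Σ_{k=0}^∞ ((a)_k (b)_k / ((c)_k · k!)) · z^k converges for every complex z with |z| < 1, satisfies F(a,b,c;0) = 1, and the function z ↦ F(a,b,c;z) satisfies the hypergeometric differential equation z(z−1)·F'' + ((a+b+1)z − c)·F' + ab·F = 0 on the open unit disc. -/

import Mathlib

/-!
The coefficients `u n = (a)ₙ (b)ₙ / ((c)ₙ n!)` are Mathlib's `ordinaryHypergeometricCoefficient`,
whose power series has radius of convergence at least `1` by the ratio test (it is a polynomial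
when `a` or `b` is a nonpositive integer), so it may be differentiated termwise on the unit disc.
They satisfy `(n + 1) (c + n) u (n + 1) = (a + n) (b + n) u n`, and this recurrence makes the
partial sums of the series obtained by applying the hypergeometric operator termwise telescope:
the sum up to `N` is `(a + N) (b + N) u N z ^ N`, which tends to `0` inside the disc.
-/

open Filter Finset FormalMultilinearSeries
open scoped Topology NNReal ENNReal

section PowerSeries

variable {𝕜 : Type*} [RCLike 𝕜] {u : ℕ → 𝕜}

theorem summable_pow_mul_norm_mul_pow (m : ℕ) {r : ℝ≥0}
    (hr : (r : ℝ≥0∞) < (ofScalars 𝕜 u).radius) :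
    Summable fun n : ℕ ↦ (n : ℝ) ^ m * ‖u n‖ * (r : ℝ) ^ n := by
  obtain ⟨s, hrs, hs⟩ := ENNReal.lt_iff_exists_nnreal_btwn.1 hr
  obtain ⟨C, -, hC⟩ := (ofScalars 𝕜 u).norm_mul_pow_le_of_lt_radius hs
  have hrs : (r : ℝ) < s := mod_cast hrs
  have hs0 : (0 : ℝ) < s := r.coe_nonneg.trans_lt hrs
  have hq : ‖(r : ℝ) / s‖ < 1 := by
    rw [Real.norm_of_nonneg (by positivity), div_lt_one hs0]
    exact hrs
  refine .of_nonneg_of_le (fun n ↦ by positivity) (fun n ↦ ?_)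
    ((summable_pow_mul_geometric_of_norm_lt_one m hq).mul_left C)
  have hCn : ‖u n‖ * (s : ℝ) ^ n ≤ C := by simpa using hC n
  calc (n : ℝ) ^ m * ‖u n‖ * (r : ℝ) ^ n
      = (n : ℝ) ^ m * ((r : ℝ) / s) ^ n * (‖u n‖ * (s : ℝ) ^ n) := by
        rw [div_pow]; field_simp
    _ ≤ (n : ℝ) ^ m * ((r : ℝ) / s) ^ n * C := by gcongr
    _ = C * ((n : ℝ) ^ m * ((r : ℝ) / s) ^ n) := by ring

theorem summable_pow_mul_coeff_mul_pow (m : ℕ) {z : 𝕜}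
    (hz : z ∈ Metric.eball (0 : 𝕜) (ofScalars 𝕜 u).radius) :
    Summable fun n : ℕ ↦ (n : 𝕜) ^ m * u n * z ^ n := by
  refine .of_norm
    ((summable_pow_mul_norm_mul_pow m (r := ‖z‖₊) (mem_eball_zero_iff.1 hz)).congr fun n ↦ ?_)
  simp [norm_mul, norm_pow]

theorem summable_coeff_mul_pow {z : 𝕜}
    (hz : z ∈ Metric.eball (0 : 𝕜) (ofScalars 𝕜 u).radius) :
    Summable fun n ↦ u n * z ^ n := by
  simpa using summable_pow_mul_coeff_mul_pow 0 hz

theorem norm_descFactorial_mul_mul_pow_le (k n : ℕ) {r : ℝ} (hr : 0 < r) {y : 𝕜}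
    (hy : ‖y‖ ≤ r) :
    ‖(n.descFactorial k : 𝕜) * u n * y ^ (n - k)‖ ≤ (n : ℝ) ^ k * ‖u n‖ * r ^ n / r ^ k := by
  rcases lt_or_ge n k with hnk | hkn
  · simp [Nat.descFactorial_eq_zero_iff_lt.2 hnk]
    positivity
  have hpow : ‖y‖ ^ (n - k) ≤ r ^ n / r ^ k := by
    rw [div_eq_mul_inv, ← pow_sub₀ r hr.ne' hkn]
    exact pow_le_pow_left₀ (norm_nonneg y) hy _
  have hdesc : ((n.descFactorial k : ℕ) : ℝ) ≤ (n : ℝ) ^ k := mod_cast Nat.descFactorial_le_pow n k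
  rw [norm_mul, norm_mul, norm_pow, RCLike.norm_natCast, mul_div_assoc]
  gcongr

theorem summable_descFactorial_mul_coeff_mul_pow (k : ℕ) {z : 𝕜}
    (hz : z ∈ Metric.eball (0 : 𝕜) (ofScalars 𝕜 u).radius) :
    Summable fun n ↦ (n.descFactorial k : 𝕜) * u n * z ^ (n - k) := by
  obtain ⟨r, hzr, hr⟩ := ENNReal.lt_iff_exists_nnreal_btwn.1 (mem_eball_zero_iff.1 hz)
  have hzr : ‖z‖ < r := mod_cast hzr
  exact .of_norm_bounded ((summable_pow_mul_norm_mul_pow k hr).div_const _)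
    fun n ↦ norm_descFactorial_mul_mul_pow_le k n ((norm_nonneg z).trans_lt hzr) hzr.le

theorem hasDerivAt_tsum_descFactorial_mul_coeff_mul_pow (k : ℕ) {z : 𝕜}
    (hz : z ∈ Metric.eball (0 : 𝕜) (ofScalars 𝕜 u).radius) :
    HasDerivAt (fun w ↦ ∑' n, (n.descFactorial k : 𝕜) * u n * w ^ (n - k))
      (∑' n, (n.descFactorial (k + 1) : 𝕜) * u n * z ^ (n - (k + 1))) z := by
  obtain ⟨r, hzr, hr⟩ := ENNReal.lt_iff_exists_nnreal_btwn.1 (mem_eball_zero_iff.1 hz)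
  have hzr : ‖z‖ < r := mod_cast hzr
  have hr0 : (0 : ℝ) < r := (norm_nonneg z).trans_lt hzr
  have hterm (n : ℕ) (y : 𝕜) : HasDerivAt (fun w ↦ (n.descFactorial k : 𝕜) * u n * w ^ (n - k))
      ((n.descFactorial (k + 1) : 𝕜) * u n * y ^ (n - (k + 1))) y := by
    refine ((hasDerivAt_pow (n - k) y).const_mul ((n.descFactorial k : 𝕜) * u n)).congr_deriv ?_
    rw [Nat.descFactorial_succ, Nat.sub_sub]
    push_cast
    ring
  refine hasDerivAt_tsum_of_isPreconnected ((summable_pow_mul_norm_mul_pow (k + 1) hr).div_const _)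
    Metric.isOpen_ball (convex_ball 0 (r : ℝ)).isPreconnected (fun n y _ ↦ hterm n y)
    (fun n y hy ↦ norm_descFactorial_mul_mul_pow_le (k + 1) n hr0 (mem_ball_zero_iff.1 hy).le)
    (mem_ball_zero_iff.2 hzr) (summable_descFactorial_mul_coeff_mul_pow k hz)
    (mem_ball_zero_iff.2 hzr)

theorem iteratedDeriv_tsum_coeff_mul_pow (k : ℕ) {z : 𝕜}
    (hz : z ∈ Metric.eball (0 : 𝕜) (ofScalars 𝕜 u).radius) :
    iteratedDeriv k (fun w ↦ ∑' n, u n * w ^ n) z =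
      ∑' n, (n.descFactorial k : 𝕜) * u n * z ^ (n - k) := by
  induction k generalizing z with
  | zero => simp
  | succ k ih =>
    have heq : iteratedDeriv k (fun w ↦ ∑' n, u n * w ^ n) =ᶠ[𝓝 z]
        fun w ↦ ∑' n, (n.descFactorial k : 𝕜) * u n * w ^ (n - k) :=
      eventually_of_mem (Metric.isOpen_eball.mem_nhds hz) fun w hw ↦ ih hw
    rw [iteratedDeriv_succ, heq.deriv_eq]
    exact (hasDerivAt_tsum_descFactorial_mul_coeff_mul_pow k hz).deriv

end PowerSeries

theorem ascPochhammer_eval_eq_prod_range {R : Type*} [CommSemiring R] (n : ℕ) (r : R) :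
    (ascPochhammer R n).eval r = ∏ i ∈ range n, (r + i) := by
  induction n with
  | zero => simp
  | succ n ih => rw [ascPochhammer_succ_eval, ih, prod_range_succ]

section Field

variable {𝕂 : Type*} [Field 𝕂] {a b c : 𝕂}

theorem ordinaryHypergeometricCoefficient_eq_prod_range (n : ℕ) :
    ordinaryHypergeometricCoefficient a b c n =
      (∏ i ∈ range n, (a + i)) * (∏ i ∈ range n, (b + i)) /
        ((∏ i ∈ range n, (c + i)) * (n.factorial : 𝕂)) := by
  simp only [ordinaryHypergeometricCoefficient, ascPochhammer_eval_eq_prod_range]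
  ring

theorem ordinaryHypergeometricCoefficient_succ [CharZero 𝕂] (hc : ∀ n : ℕ, c ≠ -n) (n : ℕ) :
    (n + 1) * (c + n) * ordinaryHypergeometricCoefficient a b c (n + 1) =
      (a + n) * (b + n) * ordinaryHypergeometricCoefficient a b c n := by
  have hcn (k : ℕ) : c + k ≠ 0 := fun h ↦ hc k (eq_neg_of_add_eq_zero_left h)
  have hpoch : (ascPochhammer 𝕂 n).eval c ≠ 0 := by
    rw [ascPochhammer_eval_eq_prod_range]
    exact prod_ne_zero_iff.2 fun k _ ↦ hcn k
  simp only [ordinaryHypergeometricCoefficient, ascPochhammer_succ_eval, Nat.factorial_succ,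
    Nat.cast_mul, Nat.cast_succ]
  have := hcn n
  have : (n : 𝕂) + 1 ≠ 0 := Nat.cast_add_one_ne_zero n
  field_simp

end Field

theorem one_le_radius_ordinaryHypergeometricSeries {𝕂 : Type*} (𝔸 : Type*) [RCLike 𝕂]
    [NormedDivisionRing 𝔸] [NormedAlgebra 𝕂 𝔸] {a b c : 𝕂} (hc : ∀ n : ℕ, c ≠ -n) :
    1 ≤ (ordinaryHypergeometricSeries 𝔸 a b c).radius := by
  by_cases ha : ∃ k : ℕ, a = -k
  · obtain ⟨k, rfl⟩ := ha
    simp [ordinaryHypergeometric_radius_top_of_neg_nat₁]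
  by_cases hb : ∃ k : ℕ, b = -k
  · obtain ⟨k, rfl⟩ := hb
    simp [ordinaryHypergeometric_radius_top_of_neg_nat₂]
  push Not at ha hb
  refine (ordinaryHypergeometricSeries_radius_eq_one 𝔸 a b c fun k ↦ ?_).ge
  refine ⟨fun h ↦ ha k ?_, fun h ↦ hb k ?_, fun h ↦ hc k ?_⟩ <;> linear_combination h

theorem sum_range_hypergeometric_terms {R : Type*} [CommRing R] {a b c z : R} {u : ℕ → R}
    (hu : ∀ n : ℕ, (n + 1) * (c + n) * u (n + 1) = (a + n) * (b + n) * u n) (N : ℕ) :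
    ∑ n ∈ range (N + 1),
        (z * (z - 1) * ((n.descFactorial 2 : R) * u n * z ^ (n - 2)) +
          ((a + b + 1) * z - c) * ((n.descFactorial 1 : R) * u n * z ^ (n - 1)) +
          a * b * (u n * z ^ n)) =
      (a + N) * (b + N) * u N * z ^ N := by
  induction N with
  | zero => simp
  | succ N ih =>
    rw [sum_range_succ, ih]
    rcases N with _ | N
    · simp [Nat.descFactorial]
      linear_combination -hu 0
    · simp only [Nat.descFactorial, Nat.add_sub_cancel, Nat.sub_zero]
      have h := hu (N + 1)
      push_cast at h ⊢
      linear_combination -(z ^ (N + 1)) * h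

theorem hypergeometric_ode_of_recurrence {𝕜 : Type*} [RCLike 𝕜] {a b c : 𝕜} {u : ℕ → 𝕜}
    (hu : ∀ n : ℕ, (n + 1) * (c + n) * u (n + 1) = (a + n) * (b + n) * u n)
    {F : 𝕜 → 𝕜} (hF : F = fun w ↦ ∑' n, u n * w ^ n) {z : 𝕜}
    (hz : z ∈ Metric.eball (0 : 𝕜) (ofScalars 𝕜 u).radius) :
    z * (z - 1) * deriv (deriv F) z + ((a + b + 1) * z - c) * deriv F z + a * b * F z = 0 := by
  have hF0 : F z = ∑' n, u n * z ^ n := by rw [hF]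
  have hF1 := iteratedDeriv_tsum_coeff_mul_pow 1 hz
  have hF2 := iteratedDeriv_tsum_coeff_mul_pow 2 hz
  rw [iteratedDeriv_one, ← hF] at hF1
  rw [iteratedDeriv_succ, iteratedDeriv_one, ← hF] at hF2
  have hsum := (((summable_descFactorial_mul_coeff_mul_pow 2 hz).hasSum.mul_left (z * (z - 1))).add
    ((summable_descFactorial_mul_coeff_mul_pow 1 hz).hasSum.mul_left ((a + b + 1) * z - c))).add
    ((summable_coeff_mul_pow hz).hasSum.mul_left (a * b))
  rw [← hF0, ← hF1, ← hF2] at hsum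
  have hpartial := (hsum.tendsto_sum_nat.comp (tendsto_add_atTop_nat 1)).congr
    (sum_range_hypergeometric_terms hu)
  have hterm : Tendsto (fun N : ℕ ↦ (a + N) * (b + N) * u N * z ^ N) atTop (𝓝 0) := by
    have := (((summable_pow_mul_coeff_mul_pow 2 hz).add
      ((summable_pow_mul_coeff_mul_pow 1 hz).mul_left (a + b))).add
      ((summable_pow_mul_coeff_mul_pow 0 hz).mul_left (a * b))).tendsto_atTop_zero
    exact this.congr fun N ↦ by ring
  exact tendsto_nhds_unique hpartial hterm

/-- For `a, b, c ∈ ℂ` with `c` not a nonpositive integer, the Gauss hypergeometric series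
`F(a,b,c;z) = Σ (a)ₖ(b)ₖ/((c)ₖ k!) zᵏ` converges for `|z| < 1`, satisfies `F(a,b,c;0) = 1`,
and satisfies the hypergeometric equation
`z(z−1) F'' + ((a+b+1)z − c) F' + ab F = 0` on the open unit disc. -/
theorem gauss_hypergeometric_series (a b c : ℂ) (hc : ∀ n : ℕ, c ≠ -(n : ℂ))
    (F : ℂ → ℂ)
    (hF : ∀ z : ℂ, F z = ∑' k : ℕ,
      (∏ i ∈ Finset.range k, (a + i)) * (∏ i ∈ Finset.range k, (b + i)) /
          ((∏ i ∈ Finset.range k, (c + i)) * (Nat.factorial k : ℂ)) * z ^ k) :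
    (∀ z : ℂ, ‖z‖ < 1 → Summable fun k : ℕ =>
      (∏ i ∈ Finset.range k, (a + i)) * (∏ i ∈ Finset.range k, (b + i)) /
          ((∏ i ∈ Finset.range k, (c + i)) * (Nat.factorial k : ℂ)) * z ^ k) ∧
    F 0 = 1 ∧
    (∀ z : ℂ, ‖z‖ < 1 →
      z * (z - 1) * deriv (deriv F) z + ((a + b + 1) * z - c) * deriv F z + a * b * F z = 0) := by
  simp_rw [← ordinaryHypergeometricCoefficient_eq_prod_range] at hF ⊢
  have hF' : F = fun w ↦ ∑' n, ordinaryHypergeometricCoefficient a b c n * w ^ n := funext hF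
  have hdisc {z : ℂ} (hz : ‖z‖ < 1) :
      z ∈ Metric.eball (0 : ℂ) (ofScalars ℂ (ordinaryHypergeometricCoefficient a b c)).radius := by
    rw [mem_eball_zero_iff]
    refine lt_of_lt_of_le ?_ (one_le_radius_ordinaryHypergeometricSeries ℂ hc)
    simpa [← ofReal_norm] using hz
  refine ⟨fun z hz ↦ summable_coeff_mul_pow (hdisc hz), ?_,
    fun z hz ↦ hypergeometric_ode_of_recurrence (ordinaryHypergeometricCoefficient_succ hc) hF'
      (hdisc hz)⟩
  rw [hF, tsum_eq_single 0 fun n hn ↦ by simp [hn]]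
  simp [ordinaryHypergeometricCoefficient]
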